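/- Let (A, f) be a finite-dimensional quadratic Lie algebra over a field K of characteristic zero, B a finite-dimensional Lie algebra over K, and φ : B → Der_f(A) a Lie algebra homomorphism into the f-skew-symmetric derivations of A. Define w : A × A → B* by w(a,a')(b) = f(φ(b)(a), a'). On the vector space A_B = B ⊕ A ⊕ B* define the bracket [b + a + β, b' + a' + β'] = [b,b']_B + φ(b)(a') − φ(b')(a) + [a,a']_A + w(a,a') + ad*(b)(β') − ad*(b')(β), where ad*(b)(β) = −β∘ad(b) is the coadjoint action, and the bilinear form f_B(b + a + β, b' + a' + β') = β(b') + β'(b) + f(a,a'). Then this bracket makes A_B a Lie algebra and f_B is a nondegenerate symmetric invariant bilinear form, so (A_B, f_B) is a quadratic Lie algebra (the double extension of A by (B, φ)). -/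
import Mathlib


open Module

variable {K A B : Type*}

/-- The bracket of the double extension `A_B = B ⊕ A ⊕ B*`:
`[b + a + β, b' + a' + β'] = [b,b']_B + φ(b)(a') − φ(b')(a) + [a,a']_A + w(a,a')
  + ad*(b)(β') − ad*(b')(β)`, where `w(a,a')(b) = f(φ(b)(a), a')` and
`ad*(b)(β) = −β ∘ ad(b)`. -/
def deBr [Field K] [LieRing A] [LieAlgebra K A] [LieRing B] [LieAlgebra K B]
    (f : A →ₗ[K] A →ₗ[K] K) (φ : B →ₗ[K] A →ₗ[K] A)
    (X Y : B × A × Module.Dual K B) : B × A × Module.Dual K B :=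
  (⁅X.1, Y.1⁆,
   φ X.1 Y.2.1 - φ Y.1 X.2.1 + ⁅X.2.1, Y.2.1⁆,
   ((f.flip Y.2.1) ∘ₗ (φ.flip X.2.1))
     + (-(Y.2.2 ∘ₗ (LieAlgebra.ad K B X.1))) - (-(X.2.2 ∘ₗ (LieAlgebra.ad K B Y.1))))

/-- The bilinear form of the double extension:
`f_B(b + a + β, b' + a' + β') = β(b') + β'(b) + f(a,a')`. -/
def deForm [Field K] [LieRing A] [LieAlgebra K A] [LieRing B] [LieAlgebra K B]
    (f : A →ₗ[K] A →ₗ[K] K)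
    (X Y : B × A × Module.Dual K B) : K :=
  X.2.2 Y.1 + Y.2.2 X.1 + f X.2.1 Y.2.1

set_option maxHeartbeats 2000000 in
/-- The double extension of a quadratic Lie algebra `(A, f)` by `(B, φ)` is a quadratic
Lie algebra: the bracket is bilinear, skew-symmetric and satisfies the Jacobi identity,
and `f_B` is a nondegenerate symmetric invariant bilinear form. -/
theorem stmt0 [Field K] [CharZero K] [LieRing A] [LieAlgebra K A] [FiniteDimensional K A]
    [LieRing B] [LieAlgebra K B] [FiniteDimensional K B]
    (f : A →ₗ[K] A →ₗ[K] K)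
    (hsymm : ∀ x y, f x y = f y x)
    (hnd : ∀ x, (∀ y, f x y = 0) → x = 0)
    (hinv : ∀ x y z, f ⁅x, y⁆ z = f x ⁅y, z⁆)
    (φ : B →ₗ[K] A →ₗ[K] A)
    (hφlie : ∀ b b' : B, φ ⁅b, b'⁆ = φ b ∘ₗ φ b' - φ b' ∘ₗ φ b)
    (hφder : ∀ (b : B) (x y : A), φ b ⁅x, y⁆ = ⁅φ b x, y⁆ + ⁅x, φ b y⁆)
    (hφskew : ∀ (b : B) (x y : A), f (φ b x) y + f x (φ b y) = 0) :
    (∀ X Y Z : B × A × Module.Dual K B,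
        deBr f φ (X + Y) Z = deBr f φ X Z + deBr f φ Y Z) ∧
    (∀ (c : K) (X Y : B × A × Module.Dual K B),
        deBr f φ (c • X) Y = c • deBr f φ X Y) ∧
    (∀ X Y : B × A × Module.Dual K B, deBr f φ X Y = - deBr f φ Y X) ∧
    (∀ X Y Z : B × A × Module.Dual K B,
        deBr f φ X (deBr f φ Y Z) + deBr f φ Y (deBr f φ Z X) +
          deBr f φ Z (deBr f φ X Y) = 0) ∧
    (∀ X Y : B × A × Module.Dual K B, deForm f X Y = deForm f Y X) ∧
    (∀ X : B × A × Module.Dual K B, (∀ Y, deForm f X Y = 0) → X = 0) ∧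
    (∀ X Y Z : B × A × Module.Dual K B,
        deForm f (deBr f φ X Y) Z = deForm f X (deBr f φ Y Z)) := by
  have hsk : ∀ (b : B) (x y : A), f (φ b x) y = - f x (φ b y) := fun b x y => by
    linear_combination hφskew b x y
  have h1 : ∀ (b b' : B) (x : A), φ ⁅b, b'⁆ x = φ b (φ b' x) - φ b' (φ b x) := fun b b' x => by
    rw [hφlie]; rfl
  have cyc3 : ∀ (c : B) (x y z : A),
      f (φ c x) ⁅y, z⁆ + f (φ c y) ⁅z, x⁆ + f (φ c z) ⁅x, y⁆ = 0 := by
    intro c x y z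
    have e1 : f (φ c x) ⁅y, z⁆ = - f x (φ c ⁅y, z⁆) := hsk c x ⁅y, z⁆
    have e2 : f x ⁅φ c y, z⁆ = f (φ c y) ⁅z, x⁆ := by rw [hsymm x, hinv]
    have e3 : f x ⁅y, φ c z⁆ = f (φ c z) ⁅x, y⁆ := by rw [← hinv, hsymm]
    have e5 : f x (φ c ⁅y, z⁆) = f x ⁅φ c y, z⁆ + f x ⁅y, φ c z⁆ := by
      rw [hφder, map_add]
    linear_combination e1 - e5 - e2 - e3
  refine ⟨?_, ?_, ?_, ?_, ?_, ?_, ?_⟩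
  · intro X Y Z
    refine Prod.ext ?_ (Prod.ext ?_ ?_)
    · simp [deBr, add_lie]
    · simp only [deBr, Prod.fst_add, Prod.snd_add, map_add, add_lie, LinearMap.add_apply,
        Prod.mk_add_mk]
      abel
    · refine LinearMap.ext fun c => ?_
      simp only [deBr, Prod.fst_add, Prod.snd_add, map_add, add_lie, LinearMap.add_apply,
        LinearMap.sub_apply, LinearMap.neg_apply, LinearMap.comp_apply, LinearMap.flip_apply,
        LieAlgebra.ad_apply, Prod.mk_add_mk, map_sub]
      ring
  · intro c X Y
    refine Prod.ext ?_ (Prod.ext ?_ ?_)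
    · simp [deBr, smul_lie]
    · simp only [deBr, Prod.smul_fst, Prod.smul_snd, map_smul, smul_lie, LinearMap.smul_apply,
        Prod.smul_mk, smul_sub, smul_add]
    · refine LinearMap.ext fun d => ?_
      simp only [deBr, Prod.smul_fst, Prod.smul_snd, map_smul, smul_lie, LinearMap.smul_apply,
        LinearMap.sub_apply, LinearMap.neg_apply, LinearMap.comp_apply, LinearMap.flip_apply,
        LieAlgebra.ad_apply, Prod.smul_mk, smul_eq_mul, smul_lie, lie_smul,
        LinearMap.add_apply]
      ring
  · intro X Y
    refine Prod.ext ?_ (Prod.ext ?_ ?_)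
    · simp only [deBr, Prod.fst_neg]
      exact (lie_skew X.1 Y.1).symm
    · simp only [deBr, Prod.fst_neg, Prod.snd_neg, Prod.neg_mk]
      rw [← lie_skew X.2.1 Y.2.1]
      abel
    · refine LinearMap.ext fun c => ?_
      simp only [deBr, Prod.fst_neg, Prod.snd_neg, Prod.neg_mk, LinearMap.add_apply,
        LinearMap.sub_apply, LinearMap.neg_apply, LinearMap.comp_apply, LinearMap.flip_apply,
        LieAlgebra.ad_apply]
      linear_combination hsk c X.2.1 Y.2.1 - hsymm X.2.1 ((φ c) Y.2.1)
  · intro X Y Z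
    obtain ⟨b, a, β⟩ := X
    obtain ⟨b', a', β'⟩ := Y
    obtain ⟨b'', a'', β''⟩ := Z
    refine Prod.ext ?_ (Prod.ext ?_ ?_)
    · simpa [deBr] using lie_jacobi b b' b''
    · simp only [deBr, map_add, map_sub, lie_add, lie_sub, Prod.fst_add,
        Prod.snd_add, Prod.mk_add_mk, Prod.fst_zero, Prod.snd_zero]
      linear_combination (norm := abel)
        -(h1 b' b'' a) - (h1 b'' b a') - (h1 b b' a'') + hφder b a' a'' + hφder b' a'' a +
        hφder b'' a a' - lie_skew ((φ b') a'') a - lie_skew ((φ b) a') a'' -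
        lie_skew ((φ b'') a) a' + lie_jacobi a a' a''
    · refine LinearMap.ext fun c => ?_
      simp only [deBr, map_add, map_sub, map_neg, lie_add, lie_sub, Prod.fst_add, Prod.snd_add,
        Prod.mk_add_mk, LinearMap.add_apply, LinearMap.sub_apply, LinearMap.neg_apply,
        LinearMap.comp_apply, LinearMap.flip_apply, LieAlgebra.ad_apply, LinearMap.zero_apply,
        Prod.fst_zero, Prod.snd_zero]
      have bβ : β ⁅⁅b', b''⁆, c⁆ = β ⁅b', ⁅b'', c⁆⁆ - β ⁅b'', ⁅b', c⁆⁆ := by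
        rw [lie_lie, map_sub]
      have bβ' : β' ⁅⁅b'', b⁆, c⁆ = β' ⁅b'', ⁅b, c⁆⁆ - β' ⁅b, ⁅b'', c⁆⁆ := by
        rw [lie_lie, map_sub]
      have bβ'' : β'' ⁅⁅b, b'⁆, c⁆ = β'' ⁅b, ⁅b', c⁆⁆ - β'' ⁅b', ⁅b, c⁆⁆ := by
        rw [lie_lie, map_sub]
      have e1 : f (φ ⁅b, c⁆ a') a'' = f (φ b (φ c a')) a'' - f (φ c (φ b a')) a'' := by
        rw [h1, map_sub, LinearMap.sub_apply]
      have e2 : f (φ ⁅b', c⁆ a'') a = f (φ b' (φ c a'')) a - f (φ c (φ b' a'')) a := by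
        rw [h1, map_sub, LinearMap.sub_apply]
      have e3 : f (φ ⁅b'', c⁆ a) a' = f (φ b'' (φ c a)) a' - f (φ c (φ b'' a)) a' := by
        rw [h1, map_sub, LinearMap.sub_apply]
      have k1 := hsk b (φ c a') a''
      have k2 := hsk c (φ b a') a''
      have k3 := hsk b' (φ c a'') a
      have k4 := hsk c (φ b' a'') a
      have k5 := hsk b'' (φ c a) a'
      have k6 := hsk c (φ b'' a) a'
      have m1 := hsymm (φ b a') (φ c a'')
      have m2 := hsymm (φ b' a'') (φ c a)
      have m3 := hsymm (φ b'' a) (φ c a')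
      have t := cyc3 c a a' a''
      linear_combination bβ + bβ' + bβ'' + t - e1 - e2 - e3 - k1 + k2 - k3 + k4 - k5 + k6 -
        m1 - m2 - m3
  · intro X Y
    simp only [deForm]
    rw [hsymm]
    ring
  · intro X h
    obtain ⟨b, a, β⟩ := X
    have hb : b = 0 := by
      rw [← Module.forall_dual_apply_eq_zero_iff K b]
      intro g
      have := h (0, 0, g)
      simpa [deForm] using this
    have hβ : β = 0 := by
      refine LinearMap.ext fun c => ?_
      have := h (c, 0, 0)
      simpa [deForm] using this
    have ha : a = 0 := by
      refine hnd a fun y => ?_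
      have := h (0, y, 0)
      simpa [deForm] using this
    exact Prod.ext hb (Prod.ext ha hβ)
  · intro X Y Z
    obtain ⟨b, a, β⟩ := X
    obtain ⟨b', a', β'⟩ := Y
    obtain ⟨b'', a'', β''⟩ := Z
    simp only [deForm, deBr, map_add, map_sub, LinearMap.add_apply, LinearMap.sub_apply,
      LinearMap.neg_apply, LinearMap.comp_apply, LinearMap.flip_apply, LieAlgebra.ad_apply]
    have s1 : β' ⁅b'', b⁆ = - β' ⁅b, b''⁆ := by rw [← lie_skew, map_neg]
    have s2 : β'' ⁅b', b⁆ = - β'' ⁅b, b'⁆ := by rw [← lie_skew, map_neg]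
    have k1 := hsk b'' a a'
    have k2 := hsk b' a a''
    have i1 := hinv a a' a''
    linear_combination k1 - s1 + s2 - k2 + i1
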